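/- arXiv:math/0502510 — 3 statements merged into one kernel-verified Lean document; each statement's English description precedes it below -/
import Mathlib

section
/- Let $q \in \mathbb{N}$ and let $\varrho$ be an integer with $\varrho^2 \equiv -1 \pmod q$. Then for each non-zero integer $b$, there exist coprime integers $u, v$ with $v > 0$ such that $|b\varrho/q - u/v| \leq 1/(v\sqrt{2q})$ and $\sqrt{q/2}/|b| \leq v \leq \sqrt{2q}$. -/
/-!
By Dirichlet's theorem with `N = √(2q)` there is a fraction `u / v` in lowest terms with
`v ≤ √(2q)` and `|bϱ/q - u/v| ≤ 1 / (v√(2q))`. For the lower bound on `v` put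
`r = bϱv - qu`; then `|r| ≤ √(q/2)`, while `ϱ² ≡ -1 (mod q)` gives `r² ≡ -(bv)² (mod q)`,
so `q ≤ r² + (bv)²` and hence `(bv)² ≥ q/2`.
-/

theorem Real.exists_rat_abs_sub_le_of_one_le (ξ : ℝ) {N : ℝ} (hN : 1 ≤ N) :
    ∃ r : ℚ, (r.den : ℝ) ≤ N ∧ |ξ - r| ≤ 1 / (r.den * N) := by
  have hn : 0 < ⌊N⌋₊ := Nat.floor_pos.mpr hN
  obtain ⟨r, hr, hden⟩ := Real.exists_rat_abs_sub_le_and_den_le ξ hn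
  have hden' : (r.den : ℝ) ≤ ⌊N⌋₊ := mod_cast hden
  refine ⟨r, hden'.trans (Nat.floor_le (by linarith)), hr.trans ?_⟩
  rw [mul_comm (r.den : ℝ)]
  gcongr
  exact (Nat.lt_floor_add_one N).le

theorem Int.le_sq_add_sq_of_dvd_sq_add_one {q ϱ x : ℤ} (hϱ : q ∣ ϱ ^ 2 + 1) (hx : x ≠ 0)
    (u : ℤ) : q ≤ (ϱ * x - q * u) ^ 2 + x ^ 2 := by
  refine Int.le_of_dvd (by positivity) ?_
  rw [show (ϱ * x - q * u) ^ 2 + x ^ 2 = x ^ 2 * (ϱ ^ 2 + 1) + q * (u * (q * u - 2 * ϱ * x)) by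
    ring]
  exact (hϱ.mul_left _).add (dvd_mul_right _ _)

theorem sq_mul_sub_le_half_of_abs_div_sub_le {q y u v : ℝ} (hq : 0 < q) (hv : 0 < v)
    (h : |y / q - u / v| ≤ 1 / (v * √(2 * q))) : (v * y - q * u) ^ 2 ≤ q / 2 := by
  have heq : v * y - q * u = q * v * (y / q - u / v) := by field_simp
  have habs : |v * y - q * u| ≤ q / √(2 * q) := by
    rw [heq, abs_mul, abs_of_pos (by positivity)]
    calc q * v * |y / q - u / v| ≤ q * v * (1 / (v * √(2 * q))) := by gcongr
      _ = q / √(2 * q) := by field_simp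
  calc (v * y - q * u) ^ 2 = |v * y - q * u| ^ 2 := (sq_abs _).symm
    _ ≤ (q / √(2 * q)) ^ 2 := by gcongr
    _ = q / 2 := by
      rw [div_pow, Real.sq_sqrt (by positivity)]
      field_simp

theorem sqrt_half_le_abs_mul_of_abs_sub_le {q : ℕ} (hq : 0 < q) {ϱ b u v : ℤ}
    (hϱ : (q : ℤ) ∣ ϱ ^ 2 + 1) (hb : b ≠ 0) (hv : 0 < v)
    (h : |(b : ℝ) * ϱ / q - u / v| ≤ 1 / (v * √(2 * q))) :
    √(q / 2) ≤ |(b : ℝ)| * v := by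
  have hr : (((b * ϱ * v - q * u : ℤ) : ℝ)) ^ 2 ≤ q / 2 := by
    push_cast
    convert sq_mul_sub_le_half_of_abs_div_sub_le (y := b * ϱ) (by positivity)
      (by exact_mod_cast hv) h using 2
    ring
  have hq_le : (q : ℝ) ≤ ((b * ϱ * v - q * u : ℤ) : ℝ) ^ 2 + ((b : ℝ) * v) ^ 2 := by
    have := Int.le_sq_add_sq_of_dvd_sq_add_one hϱ (mul_ne_zero hb hv.ne') u
    rw [show ϱ * (b * v) = b * ϱ * v by ring] at this
    exact_mod_cast this
  rw [← abs_of_pos (show (0 : ℝ) < v by exact_mod_cast hv), ← abs_mul,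
    ← Real.sqrt_sq_eq_abs]
  exact Real.sqrt_le_sqrt (by linarith)

/-- Diophantine approximation of `bϱ/q` where `ϱ² ≡ -1 (mod q)`. -/
theorem stmt_2 (q : ℕ) (hq : 0 < q) (ϱ : ℤ) (hϱ : (q : ℤ) ∣ ϱ ^ 2 + 1)
    (b : ℤ) (hb : b ≠ 0) :
    ∃ u v : ℤ, 0 < v ∧ IsCoprime u v ∧
      |(b : ℝ) * ϱ / q - u / v| ≤ 1 / (v * Real.sqrt (2 * q)) ∧
      Real.sqrt (q / 2) / |(b : ℝ)| ≤ (v : ℝ) ∧ (v : ℝ) ≤ Real.sqrt (2 * q) := by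
  have hN : 1 ≤ √(2 * q) := Real.one_le_sqrt.mpr (by norm_cast; omega)
  obtain ⟨r, hden, happrox⟩ := Real.exists_rat_abs_sub_le_of_one_le ((b : ℝ) * ϱ / q) hN
  rw [Rat.cast_def] at happrox
  have hv : (0 : ℤ) < r.den := mod_cast r.den_pos
  refine ⟨r.num, r.den, hv, r.isCoprime_num_den, mod_cast happrox, ?_, mod_cast hden⟩
  rw [div_le_iff₀' (by positivity)]
  exact_mod_cast sqrt_half_le_abs_mul_of_abs_sub_le hq hϱ hb hv (mod_cast happrox)
end

section
/- Let $q \in \mathbb{N}$, $\varrho$ an integer with $\varrho^2 \equiv -1 \pmod q$, $b$ a nonzero integer, and $v$ a positive integer with $v \leq \sqrt{2q}$ such that there exists an integer $u$ coprime to $v$ with $|b\varrho/q - u/v| \leq 1/(v\sqrt{2q})$. Then $v \geq \sqrt{q/2}/|b|$. -/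
/-!
Clearing denominators, the approximation hypothesis says that `r = bϱv - qu` satisfies
`r² ≤ q/2`. Since `ϱ² ≡ -1 (mod q)`, we have `r² + (bv)² ≡ (bϱv)² + (bv)² ≡ 0 (mod q)`, and
this sum is positive, so `q ≤ r² + (bv)² ≤ q/2 + (bv)²`, i.e. `q/2 ≤ (bv)²`.
-/

lemma two_mul_sq_mul_sub_le_of_abs_sub_div_le {x u v q : ℝ} (hq : 0 < q) (hv : 0 < v)
    (h : |x / q - u / v| ≤ 1 / (v * √(2 * q))) : 2 * (x * v - q * u) ^ 2 ≤ q := by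
  have hs : 0 < √(2 * q) := Real.sqrt_pos.mpr (by positivity)
  have hclear : |x * v - q * u| ≤ q / √(2 * q) := by
    have hdiff : x / q - u / v = (x * v - q * u) / (q * v) := by field_simp
    rw [hdiff, abs_div, abs_of_pos (mul_pos hq hv), div_le_iff₀ (by positivity)] at h
    calc |x * v - q * u| ≤ 1 / (v * √(2 * q)) * (q * v) := h
      _ = q / √(2 * q) := by field_simp
  calc 2 * (x * v - q * u) ^ 2 = 2 * |x * v - q * u| ^ 2 := by rw [sq_abs]
    _ ≤ 2 * (q / √(2 * q)) ^ 2 := by gcongr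
    _ = q := by
      rw [div_pow, Real.sq_sqrt (by positivity)]
      field_simp

lemma dvd_sq_mul_sub_add_sq {R : Type*} [CommRing R] {n ϱ : R} (hϱ : n ∣ ϱ ^ 2 + 1)
    (a u : R) : n ∣ (a * ϱ - n * u) ^ 2 + a ^ 2 := by
  have hexpand : (a * ϱ - n * u) ^ 2 + a ^ 2 =
      a ^ 2 * (ϱ ^ 2 + 1) + n * (n * u ^ 2 - 2 * a * ϱ * u) := by ring
  rw [hexpand]
  exact dvd_add (dvd_mul_of_dvd_right hϱ _) (dvd_mul_right n _)

lemma le_two_mul_sq_of_dvd_sq_add_sq {q r a : ℤ} (ha : a ≠ 0) (hdvd : q ∣ r ^ 2 + a ^ 2)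
    (hr : 2 * r ^ 2 ≤ q) : q ≤ 2 * a ^ 2 := by
  have hle : q ≤ r ^ 2 + a ^ 2 := Int.le_of_dvd (by positivity) hdvd
  linarith

theorem stmt_3_general (q : ℕ) (hq : 0 < q) (ϱ : ℤ) (hϱ : (q : ℤ) ∣ ϱ ^ 2 + 1)
    (b : ℤ) (hb : b ≠ 0) (v : ℤ) (hv : 0 < v)
    (hu : ∃ u : ℤ, IsCoprime u v ∧
      |(b : ℝ) * ϱ / q - u / v| ≤ 1 / (v * Real.sqrt (2 * q))) :
    Real.sqrt (q / 2) / |(b : ℝ)| ≤ (v : ℝ) := by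
  obtain ⟨u, -, happ⟩ := hu
  have hsmall : 2 * (b * v * ϱ - q * u) ^ 2 ≤ (q : ℤ) := by
    have := two_mul_sq_mul_sub_le_of_abs_sub_div_le (x := b * ϱ) (u := u)
      (by exact_mod_cast hq) (by exact_mod_cast hv) happ
    exact_mod_cast (show 2 * ((b : ℝ) * v * ϱ - q * u) ^ 2 ≤ q by linarith)
  have hbig : (q : ℤ) ≤ 2 * (b * v) ^ 2 :=
    le_two_mul_sq_of_dvd_sq_add_sq (mul_ne_zero hb hv.ne') (dvd_sq_mul_sub_add_sq hϱ _ _) hsmall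
  have hbigR : (q : ℝ) / 2 ≤ (v * |(b : ℝ)|) ^ 2 := by
    rw [mul_pow, sq_abs]
    have : (q : ℝ) ≤ 2 * ((b : ℝ) * v) ^ 2 := by exact_mod_cast hbig
    linarith
  refine div_le_of_le_mul₀ (abs_nonneg _) (by positivity) ?_
  exact Real.sqrt_le_iff.mpr ⟨by positivity, hbigR⟩

/-- Lower bound for the denominator of a good rational approximation to `bϱ/q`,
where `ϱ² ≡ -1 (mod q)`. -/
theorem stmt_3 (q : ℕ) (hq : 0 < q) (ϱ : ℤ) (hϱ : (q : ℤ) ∣ ϱ ^ 2 + 1)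
    (b : ℤ) (hb : b ≠ 0) (v : ℤ) (hv : 0 < v) (hv2 : (v : ℝ) ≤ Real.sqrt (2 * q))
    (hu : ∃ u : ℤ, IsCoprime u v ∧
      |(b : ℝ) * ϱ / q - u / v| ≤ 1 / (v * Real.sqrt (2 * q))) :
    Real.sqrt (q / 2) / |(b : ℝ)| ≤ (v : ℝ) :=
  stmt_3_general q hq ϱ hϱ b hb v hv hu
end

section
/- Let $(x_0, x_2, x_4)$ be a triple of nonzero integers with $\gcd(x_0, x_2, x_4) = 1$ and $x_2^2 x_4 = x_0^3$. Then there exist coprime integers $a, b$ such that $(x_0, x_2, x_4) = \pm(a^2 b, a^3, b^3)$. -/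
/-!
A common divisor `g` of `x₂` and `x₄` satisfies `g³ ∣ x₂² x₄ = x₀³`, hence `g ∣ x₀`, so primitivity
makes `x₂` and `x₄` coprime. Since `3` is odd, `x₂²` and `x₄ = b³` are then cubes; `x₂² = d³` forces
`x₂ = a³` and `d = a²`, and `x₀ = a² b` follows by taking cube roots.
-/

theorem exists_eq_pow_three_of_sq_eq_pow_three {R : Type*} [CommRing R] [IsDomain R]
    [IsIntegrallyClosed R] {x d : R} (h : x ^ 2 = d ^ 3) : ∃ a, x = a ^ 3 ∧ d = a ^ 2 := by
  rcases eq_or_ne d 0 with rfl | hd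
  · exact ⟨0, by simpa using h, by simp⟩
  have hdx : d ∣ x := by
    rw [← IsIntegrallyClosed.pow_dvd_pow_iff two_ne_zero, h]
    exact pow_dvd_pow d (by norm_num)
  obtain ⟨a, rfl⟩ := hdx
  have ha : a ^ 2 = d :=
    mul_left_cancel₀ (pow_ne_zero 2 hd) (by linear_combination h)
  exact ⟨a, by rw [← ha]; ring, ha.symm⟩

theorem Int.isCoprime_of_gcd_gcd_eq_one_of_sq_mul_eq_pow_three {x y z : ℤ}
    (h : Int.gcd (Int.gcd x y) z = 1) (heq : y ^ 2 * z = x ^ 3) : IsCoprime y z := by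
  rw [Int.isCoprime_iff_gcd_eq_one]
  have hy := Int.gcd_dvd_left y z
  have hz := Int.gcd_dvd_right y z
  have hx : (y.gcd z : ℤ) ∣ x := by
    rw [← Int.pow_dvd_pow_iff three_ne_zero, ← heq, pow_succ]
    exact mul_dvd_mul (pow_dvd_pow_of_dvd hy 2) hz
  rw [← Nat.dvd_one, ← h]
  exact Int.dvd_gcd (Int.natCast_dvd_natCast.2 (Int.dvd_gcd hx hy)) hz

theorem stmt_7_general (x0 x2 x4 : ℤ)
    (hgcd : Int.gcd (Int.gcd x0 x2) x4 = 1) (heq : x2 ^ 2 * x4 = x0 ^ 3) :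
    ∃ a b : ℤ, IsCoprime a b ∧
      ((x0, x2, x4) = (a ^ 2 * b, a ^ 3, b ^ 3) ∨
       (x0, x2, x4) = (-(a ^ 2 * b), -(a ^ 3), -(b ^ 3))) := by
  have hcop := Int.isCoprime_of_gcd_gcd_eq_one_of_sq_mul_eq_pow_three hgcd heq
  have hodd : Odd 3 := by decide
  obtain ⟨d, hd⟩ := Int.eq_pow_of_mul_eq_pow_odd_left hcop.pow_left hodd heq
  obtain ⟨b, hb⟩ := Int.eq_pow_of_mul_eq_pow_odd_right hcop.pow_left hodd heq
  obtain ⟨a, ha, rfl⟩ := exists_eq_pow_three_of_sq_eq_pow_three hd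
  have hx0 : x0 = a ^ 2 * b := (hodd.pow_inj).1 (by rw [← heq, ha, hb]; ring)
  refine ⟨a, b, ?_, Or.inl (by rw [hx0, ha, hb])⟩
  rw [ha, hb] at hcop
  exact (IsCoprime.pow_iff three_pos three_pos).1 hcop

/-- Primitive integer points on `x₂² x₄ = x₀³` with nonzero coordinates are
of the form `±(a²b, a³, b³)` with `a, b` coprime. -/
theorem stmt_7 (x0 x2 x4 : ℤ) (h0 : x0 ≠ 0) (h2 : x2 ≠ 0) (h4 : x4 ≠ 0)
    (hgcd : Int.gcd (Int.gcd x0 x2) x4 = 1) (heq : x2 ^ 2 * x4 = x0 ^ 3) :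
    ∃ a b : ℤ, IsCoprime a b ∧
      ((x0, x2, x4) = (a ^ 2 * b, a ^ 3, b ^ 3) ∨
       (x0, x2, x4) = (-(a ^ 2 * b), -(a ^ 3), -(b ^ 3))) :=
  stmt_7_general x0 x2 x4 hgcd heq
end
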